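/- The class of semilinear functions ℝⁿ → ℝ equals the smallest class of real-valued functions closed under composition containing (i) all affine functions with rational coefficients and (ii) the ternary function ifPos(x,y,z) = y if x > 0 and z otherwise. -/

import Mathlib

open FirstOrder

/-- Function symbols of the language `(+, 0, 1)`. -/
inductive OrdAddFunc : ℕ → Type
  | zero : OrdAddFunc 0
  | one : OrdAddFunc 0
  | add : OrdAddFunc 2

/-- Relation symbols of the language `(<)`. -/
inductive OrdAddRel : ℕ → Type
  | lt : OrdAddRel 2

/-- The first-order language of the structure `(ℝ, +, <, 0, 1)`. -/
def ordAddLang : Language := ⟨OrdAddFunc, OrdAddRel⟩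

instance : ordAddLang.Structure ℝ where
  funMap {_} f x :=
    match f with
    | OrdAddFunc.zero => 0
    | OrdAddFunc.one => 1
    | OrdAddFunc.add => x 0 + x 1
  RelMap {_} r x :=
    match r with
    | OrdAddRel.lt => x 0 < x 1

/-- A function `ℝⁿ → ℝ` is semilinear if its graph is definable without parameters
in the structure `(ℝ, +, <, 0, 1)`. -/
def Semilinear {n : ℕ} (f : (Fin n → ℝ) → ℝ) : Prop :=
  Set.Definable (∅ : Set ℝ) ordAddLang
    {v : Fin (n + 1) → ℝ | f (fun i => v i.castSucc) = v (Fin.last n)}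

/-- The smallest class of real-valued functions (of all finite arities) closed under
composition and containing (i) all affine functions with rational coefficients and
(ii) the ternary function `ifPos (x, y, z) = if x > 0 then y else z`. -/
inductive SemilinGen : {n : ℕ} → ((Fin n → ℝ) → ℝ) → Prop
  | affine {n : ℕ} (c : Fin n → ℚ) (b : ℚ) :
      SemilinGen (fun v => (∑ i, (c i : ℝ) * v i) + (b : ℝ))
  | ifPos : SemilinGen (n := 3) (fun v => if 0 < v 0 then v 1 else v 2)
  | comp {m n : ℕ} {g : (Fin m → ℝ) → ℝ} {f : Fin m → (Fin n → ℝ) → ℝ} :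
      SemilinGen g → (∀ i, SemilinGen (f i)) → SemilinGen (fun v => g (fun i => f i v))

/-!
A generated function has a definable graph: the graph of a composite is the projection of an
intersection of preimages of the graphs of its parts, and definable sets are closed under these
operations.

Conversely, call a set semilinear if it is a finite union of sets each cut out by finitely many
strict or weak linear inequalities with integer coefficients. Fourier–Motzkin elimination shows
that such sets are closed under projection, so by induction on formulas every definable set is
semilinear. Now let the graph of `f` be semilinear. Over each point `x`, the point `(x, f x)` lies
in some basic piece of the graph. If no constraint of that piece involving the last coordinate
were tight at `(x, f x)`, the piece, and with it the graph, would contain a vertical segment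
through that point. So `f x` is the root of such a constraint, a rational affine function of `x`.
Hence `f` agrees with one of finitely many rational affine functions on each of finitely many
semilinear sets, and nested `ifPos` glue these pieces together; membership in a semilinear set
is itself decided by nested `ifPos` applied to affine functions.
-/

open FirstOrder.Language

def LtOrLe {γ : Type*} [LT γ] [LE γ] (s : Bool) (x y : γ) : Prop := if s then x < y else x ≤ y

section LtOrLe

variable {γ : Type*}

@[simp] lemma ltOrLe_true [LT γ] [LE γ] {x y : γ} : LtOrLe true x y ↔ x < y := Iff.rfl

@[simp] lemma ltOrLe_false [LT γ] [LE γ] {x y : γ} : LtOrLe false x y ↔ x ≤ y := Iff.rfl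

variable [LinearOrder γ] {s s' : Bool} {x y z : γ}

lemma LtOrLe.of_lt (h : x < y) : LtOrLe s x y := by
  cases s
  exacts [h.le, h]

lemma LtOrLe.le (h : LtOrLe s x y) : x ≤ y := by
  cases s
  exacts [h, h.le]

lemma LtOrLe.lt_of_ne (h : LtOrLe s x y) (hne : x ≠ y) : x < y := h.le.lt_of_ne hne

lemma LtOrLe.of_or_left (h : LtOrLe (s || s') x y) : LtOrLe s x y := by
  cases s <;> cases s' <;> simp_all [le_of_lt]

lemma LtOrLe.of_or_right (h : LtOrLe (s || s') x y) : LtOrLe s' x y := by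
  cases s <;> cases s' <;> simp_all [le_of_lt]

lemma LtOrLe.trans (h₁ : LtOrLe s x y) (h₂ : LtOrLe s' y z) : LtOrLe (s || s') x z := by
  cases s <;> cases s' <;> simp only [ltOrLe_true, ltOrLe_false, Bool.or_true, Bool.or_false] at *
  exacts [h₁.trans h₂, h₁.trans_lt h₂, h₁.trans_le h₂, h₁.trans h₂]

lemma not_ltOrLe : ¬ LtOrLe s x y ↔ LtOrLe (!s) y x := by
  cases s <;> simp

lemma StrictMono.ltOrLe_iff {δ : Type*} [LinearOrder δ] {f : γ → δ} (hf : StrictMono f) :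
    LtOrLe s (f x) (f y) ↔ LtOrLe s x y := by
  cases s <;> simp [hf.lt_iff_lt, hf.le_iff_le]

lemma StrictAnti.ltOrLe_iff {δ : Type*} [LinearOrder δ] {f : γ → δ} (hf : StrictAnti f) :
    LtOrLe s (f x) (f y) ↔ LtOrLe s y x := by
  cases s <;> simp [hf.lt_iff_gt, hf.le_iff_ge]

/-- Helly's theorem for rays in a line. -/
lemma exists_ltOrLe_between [Nonempty γ] [DenselyOrdered γ] [NoMinOrder γ] [NoMaxOrder γ]
    {ι : Type*} {lo hi : Set ι} (hlo : lo.Finite) (hhi : hi.Finite) (b : ι → γ) (σ : ι → Bool)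
    (h : ∀ i ∈ lo, ∀ j ∈ hi, LtOrLe (σ i || σ j) (b i) (b j)) :
    ∃ t, (∀ i ∈ lo, LtOrLe (σ i) (b i) t) ∧ ∀ j ∈ hi, LtOrLe (σ j) t (b j) := by
  rcases lo.eq_empty_or_nonempty with rfl | hlo'
  · obtain ⟨t, ht⟩ := (hhi.image b).bddBelow
    obtain ⟨t', ht'⟩ := exists_lt t
    exact ⟨t', by simp, fun j hj => .of_lt (ht'.trans_le (ht (Set.mem_image_of_mem b hj)))⟩
  rcases hi.eq_empty_or_nonempty with rfl | hhi'
  · obtain ⟨t, ht⟩ := (hlo.image b).bddAbove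
    obtain ⟨t', ht'⟩ := exists_gt t
    exact ⟨t', fun i hi => .of_lt ((ht (Set.mem_image_of_mem b hi)).trans_lt ht'), by simp⟩
  obtain ⟨i₀, hi₀, hmax⟩ := Set.exists_max_image lo b hlo hlo'
  obtain ⟨j₀, hj₀, hmin⟩ := Set.exists_min_image hi b hhi hhi'
  rcases (h i₀ hi₀ j₀ hj₀).le.lt_or_eq with hlt | heq
  · obtain ⟨t, hi₀t, htj₀⟩ := exists_between hlt
    exact ⟨t, fun i hi => .of_lt ((hmax i hi).trans_lt hi₀t),
      fun j hj => .of_lt (htj₀.trans_le (hmin j hj))⟩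
  · refine ⟨b i₀, fun i hi => ?_, fun j hj => (h i₀ hi₀ j hj).of_or_right⟩
    rw [heq]
    exact (h i hi j₀ hj₀).of_or_left

end LtOrLe

structure LinConstraint (α : Type*) where
  coeff : α → ℤ
  const : ℤ
  strict : Bool

namespace LinConstraint

variable {α β : Type*} [Fintype α]

def eval (a : LinConstraint α) (v : α → ℝ) : ℝ := ∑ i, (a.coeff i : ℝ) * v i + a.const

def Holds (a : LinConstraint α) (v : α → ℝ) : Prop := LtOrLe a.strict (a.eval v) 0

def neg (a : LinConstraint α) : LinConstraint α := ⟨-a.coeff, -a.const, !a.strict⟩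

lemma eval_neg (a : LinConstraint α) (v : α → ℝ) : a.neg.eval v = -a.eval v := by
  simp only [eval, neg, Pi.neg_apply, Int.cast_neg, neg_mul, Finset.sum_neg_distrib]
  ring

lemma holds_neg_iff (a : LinConstraint α) (v : α → ℝ) : a.neg.Holds v ↔ ¬ a.Holds v := by
  rw [Holds, Holds, not_ltOrLe, eval_neg, neg]
  cases a.strict <;> simp

def comap [DecidableEq β] (ρ : α → β) (a : LinConstraint α) : LinConstraint β :=
  ⟨fun j => ∑ i with ρ i = j, a.coeff i, a.const, a.strict⟩

lemma eval_comap [Fintype β] [DecidableEq β] (ρ : α → β) (a : LinConstraint α) (v : β → ℝ) :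
    (a.comap ρ).eval v = a.eval (v ∘ ρ) := by
  simp only [eval, comap, Int.cast_sum, Finset.sum_mul, Function.comp_apply]
  rw [← Finset.sum_fiberwise Finset.univ ρ]
  congr 1
  refine Finset.sum_congr rfl fun j _ => Finset.sum_congr rfl fun i hi => ?_
  rw [(Finset.mem_filter.1 hi).2]

lemma holds_comap [Fintype β] [DecidableEq β] (ρ : α → β) (a : LinConstraint α) (v : β → ℝ) :
    (a.comap ρ).Holds v ↔ a.Holds (v ∘ ρ) := by
  rw [Holds, Holds, eval_comap]
  rfl

-- On `Option α → ℝ` the coordinate `none` is the variable to be eliminated: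
-- `Option.elim' t x` is the point with that coordinate `t` and the others `x`.
def slope (a : LinConstraint (Option α)) : ℤ := a.coeff none

def tail (a : LinConstraint (Option α)) : LinConstraint α := ⟨a.coeff ∘ some, a.const, a.strict⟩

noncomputable def root (a : LinConstraint (Option α)) (x : α → ℝ) : ℝ := -a.tail.eval x / a.slope

lemma eval_elim' (a : LinConstraint (Option α)) (t : ℝ) (x : α → ℝ) :
    a.eval (Option.elim' t x) = a.slope * t + a.tail.eval x := by
  simp [eval, tail, slope, Fintype.sum_option, add_assoc]

lemma eval_elim'_eq_slope_mul {a : LinConstraint (Option α)} (h : a.slope ≠ 0) (t : ℝ)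
    (x : α → ℝ) : a.eval (Option.elim' t x) = a.slope * (t - a.root x) := by
  have : (a.slope : ℝ) ≠ 0 := by exact_mod_cast h
  rw [eval_elim', root]
  field_simp
  ring

lemma holds_elim'_of_slope_eq_zero {a : LinConstraint (Option α)} (h : a.slope = 0) (t : ℝ)
    (x : α → ℝ) : a.Holds (Option.elim' t x) ↔ a.tail.Holds x := by
  simp [Holds, eval_elim', h, tail]

lemma holds_elim'_iff_of_pos {a : LinConstraint (Option α)} (h : 0 < a.slope) (t : ℝ)
    (x : α → ℝ) : a.Holds (Option.elim' t x) ↔ LtOrLe a.strict t (a.root x) := by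
  have hmono : StrictMono fun s : ℝ => (a.slope : ℝ) * (s - a.root x) :=
    (strictMono_id.add_const _).const_mul (by exact_mod_cast h)
  rw [Holds, eval_elim'_eq_slope_mul h.ne', ← hmono.ltOrLe_iff (x := t) (y := a.root x)]
  simp

lemma holds_elim'_iff_of_neg {a : LinConstraint (Option α)} (h : a.slope < 0) (t : ℝ)
    (x : α → ℝ) : a.Holds (Option.elim' t x) ↔ LtOrLe a.strict (a.root x) t := by
  have hanti : StrictAnti fun s : ℝ => (a.slope : ℝ) * (s - a.root x) :=
    (strictMono_id.add_const _).const_mul_of_neg (by exact_mod_cast h)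
  rw [Holds, eval_elim'_eq_slope_mul h.ne, ← hanti.ltOrLe_iff (x := t) (y := a.root x)]
  simp

/-- Eliminates the variable between the upper bound `u` and the lower bound `l`. -/
def elimPair (u l : LinConstraint (Option α)) : LinConstraint α :=
  ⟨fun i => u.slope * l.coeff (some i) - l.slope * u.coeff (some i),
    u.slope * l.const - l.slope * u.const, l.strict || u.strict⟩

lemma holds_elimPair_iff {u l : LinConstraint (Option α)} (hu : 0 < u.slope) (hl : l.slope < 0)
    (x : α → ℝ) :
    (elimPair u l).Holds x ↔ LtOrLe (l.strict || u.strict) (l.root x) (u.root x) := by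
  have hu' : (0 : ℝ) < u.slope := by exact_mod_cast hu
  have hl' : (l.slope : ℝ) < 0 := by exact_mod_cast hl
  have heval : (elimPair u l).eval x = u.slope * l.tail.eval x - l.slope * u.tail.eval x := by
    simp only [eval, elimPair, tail, Function.comp_apply]
    push_cast
    simp only [sub_mul, Finset.sum_sub_distrib, mul_assoc, ← Finset.mul_sum]
    ring
  have hroots : (elimPair u l).eval x = -(u.slope * l.slope) * (l.root x - u.root x) := by
    rw [heval, root, root]
    field_simp [hu'.ne', hl'.ne]
    ring
  have hmono : StrictMono fun s : ℝ => -((u.slope : ℝ) * l.slope) * (s - u.root x) :=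
    (strictMono_id.add_const _).const_mul (neg_pos.2 (mul_neg_of_pos_of_neg hu' hl'))
  rw [Holds, hroots, ← hmono.ltOrLe_iff (x := l.root x) (y := u.root x)]
  simp [elimPair]

end LinConstraint

open LinConstraint

section RatSemilinear

variable {α β : Type*} [Fintype α]

def basicSet (B : List (LinConstraint α)) : Set (α → ℝ) := {v | ∀ a ∈ B, a.Holds v}

lemma mem_basicSet_cons {a : LinConstraint α} {B : List (LinConstraint α)} {v : α → ℝ} :
    v ∈ basicSet (a :: B) ↔ a.Holds v ∧ v ∈ basicSet B :=
  List.forall_mem_cons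

def fourierMotzkin (B : List (LinConstraint (Option α))) : List (LinConstraint α) :=
  (B.filter (·.slope = 0)).map tail ++
    (B.filter (0 < ·.slope)).flatMap fun u => (B.filter (·.slope < 0)).map (elimPair u)

lemma mem_basicSet_fourierMotzkin {B : List (LinConstraint (Option α))} {x : α → ℝ} :
    x ∈ basicSet (fourierMotzkin B) ↔ ∃ t, Option.elim' t x ∈ basicSet B := by
  simp only [basicSet, fourierMotzkin, Set.mem_ofPred_eq, List.mem_append, List.mem_map,
    List.mem_flatMap, List.mem_filter, decide_eq_true_eq]
  constructor
  · intro hx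
    obtain ⟨t, hlo, hhi⟩ := exists_ltOrLe_between (lo := {l | l ∈ B ∧ l.slope < 0})
      (hi := {u | u ∈ B ∧ 0 < u.slope}) (B.finite_toSet.subset fun _ h => h.1)
      (B.finite_toSet.subset fun _ h => h.1) (root · x) (·.strict)
      fun l hl u hu => (holds_elimPair_iff hu.2 hl.2 x).1 (hx _ (.inr ⟨u, hu, l, hl, rfl⟩))
    refine ⟨t, fun a ha => ?_⟩
    rcases lt_trichotomy a.slope 0 with h | h | h
    · exact (holds_elim'_iff_of_neg h t x).2 (hlo a ⟨ha, h⟩)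
    · exact (holds_elim'_of_slope_eq_zero h t x).2 (hx _ (.inl ⟨a, ⟨ha, h⟩, rfl⟩))
    · exact (holds_elim'_iff_of_pos h t x).2 (hhi a ⟨ha, h⟩)
  · rintro ⟨t, ht⟩ c (⟨a, ⟨ha, h⟩, rfl⟩ | ⟨u, ⟨hu, hu0⟩, l, ⟨hl, hl0⟩, rfl⟩)
    · exact (holds_elim'_of_slope_eq_zero h t x).1 (ht a ha)
    · exact (holds_elimPair_iff hu0 hl0 x).2
        (((holds_elim'_iff_of_neg hl0 t x).1 (ht l hl)).trans
          ((holds_elim'_iff_of_pos hu0 t x).1 (ht u hu)))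

/-- Integer coefficients lose nothing: a rational constraint can be scaled by a positive common
denominator. -/
def IsRatSemilinear (S : Set (α → ℝ)) : Prop :=
  ∃ L : List (List (LinConstraint α)), S = {v | ∃ B ∈ L, v ∈ basicSet B}

lemma isRatSemilinear_basicSet (B : List (LinConstraint α)) : IsRatSemilinear (basicSet B) :=
  ⟨[B], by simp⟩

lemma isRatSemilinear_setOf_holds (a : LinConstraint α) : IsRatSemilinear {v | a.Holds v} :=
  ⟨[ [a] ], by simp [basicSet]⟩

lemma isRatSemilinear_setOf_eval_eq_zero (a : LinConstraint α) :
    IsRatSemilinear {v | a.eval v = 0} := by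
  convert isRatSemilinear_basicSet [{a with strict := false}, {a.neg with strict := false}]
    using 1
  ext v
  have h₁ : ({a with strict := false} : LinConstraint α).eval v = a.eval v := rfl
  have h₂ : ({a.neg with strict := false} : LinConstraint α).eval v = -a.eval v := a.eval_neg v
  simp [basicSet, Holds, h₁, h₂, le_antisymm_iff]

lemma isRatSemilinear_empty : IsRatSemilinear (∅ : Set (α → ℝ)) := ⟨[], by simp⟩

namespace IsRatSemilinear

lemma union {S T : Set (α → ℝ)} (hS : IsRatSemilinear S) (hT : IsRatSemilinear T) :
    IsRatSemilinear (S ∪ T) := by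
  obtain ⟨L, rfl⟩ := hS
  obtain ⟨M, rfl⟩ := hT
  exact ⟨L ++ M, by ext; simp [or_and_right, exists_or]⟩

lemma inter {S T : Set (α → ℝ)} (hS : IsRatSemilinear S) (hT : IsRatSemilinear T) :
    IsRatSemilinear (S ∩ T) := by
  obtain ⟨L, rfl⟩ := hS
  obtain ⟨M, rfl⟩ := hT
  refine ⟨L.flatMap fun B => M.map (B ++ ·), ?_⟩
  ext v
  simp only [_root_.basicSet, Set.mem_inter_iff, Set.mem_ofPred_eq, List.mem_flatMap,
    List.mem_map]
  constructor
  · rintro ⟨⟨B, hB, hvB⟩, C, hC, hvC⟩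
    exact ⟨B ++ C, ⟨B, hB, C, hC, rfl⟩, fun a ha => (List.mem_append.1 ha).elim (hvB a) (hvC a)⟩
  · rintro ⟨_, ⟨B, hB, C, hC, rfl⟩, hv⟩
    exact ⟨⟨B, hB, fun a ha => hv a (List.mem_append_left _ ha)⟩, C, hC,
      fun a ha => hv a (List.mem_append_right _ ha)⟩

lemma compl_basicSet (B : List (LinConstraint α)) : IsRatSemilinear (_root_.basicSet B)ᶜ :=
  ⟨B.map fun a => [a.neg], by ext; simp [_root_.basicSet, holds_neg_iff]⟩

lemma compl {S : Set (α → ℝ)} (hS : IsRatSemilinear S) : IsRatSemilinear Sᶜ := by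
  obtain ⟨L, rfl⟩ := hS
  induction L with
  | nil => exact ⟨[ [] ], by simp [_root_.basicSet]⟩
  | cons B L ih =>
    have : {v | ∃ C ∈ B :: L, v ∈ _root_.basicSet C} =
        _root_.basicSet B ∪ {v | ∃ C ∈ L, v ∈ _root_.basicSet C} := by
      ext; simp
    rw [this, Set.compl_union]
    exact (compl_basicSet B).inter ih

lemma preimage_comp [Fintype β] (ρ : α → β) {S : Set (α → ℝ)} (hS : IsRatSemilinear S) :
    IsRatSemilinear ((fun v : β → ℝ => v ∘ ρ) ⁻¹' S) := by
  classical
  obtain ⟨L, rfl⟩ := hS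
  exact ⟨L.map (List.map (comap ρ)), by ext; simp [_root_.basicSet, holds_comap]⟩

lemma exists_elim' {S : Set (Option α → ℝ)} (hS : IsRatSemilinear S) :
    IsRatSemilinear {x : α → ℝ | ∃ t, Option.elim' t x ∈ S} := by
  obtain ⟨L, rfl⟩ := hS
  refine ⟨L.map fourierMotzkin, Set.ext fun x => ⟨?_, ?_⟩⟩
  · rintro ⟨t, B, hB, ht⟩
    exact ⟨_, List.mem_map_of_mem hB, mem_basicSet_fourierMotzkin.2 ⟨t, ht⟩⟩
  · rintro ⟨_, hB', hx⟩
    obtain ⟨B, hB, rfl⟩ := List.mem_map.1 hB'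
    obtain ⟨t, ht⟩ := mem_basicSet_fourierMotzkin.1 hx
    exact ⟨t, B, hB, ht⟩

end IsRatSemilinear

end RatSemilinear

section Terms

variable {β : Type*}

instance : Zero (ordAddLang.Term β) := ⟨Term.func OrdAddFunc.zero ![]⟩

instance : One (ordAddLang.Term β) := ⟨Term.func OrdAddFunc.one ![]⟩

instance : Add (ordAddLang.Term β) := ⟨fun s t => Term.func OrdAddFunc.add ![s, t]⟩

@[simp] lemma realize_zero (v : β → ℝ) : (0 : ordAddLang.Term β).realize v = 0 := rfl

@[simp] lemma realize_one (v : β → ℝ) : (1 : ordAddLang.Term β).realize v = 1 := rfl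

@[simp] lemma realize_add (s t : ordAddLang.Term β) (v : β → ℝ) :
    (s + t).realize v = s.realize v + t.realize v := rfl

@[simp] lemma realize_nsmulRec (n : ℕ) (t : ordAddLang.Term β) (v : β → ℝ) :
    (nsmulRec n t).realize v = n * t.realize v := by
  induction n with
  | zero => simp [nsmulRec]
  | succ n ih => simp [nsmulRec, ih, add_mul]

variable [Fintype β]

lemma exists_natAffine_eq_realize (t : ordAddLang.Term β) :
    ∃ (p : β → ℕ) (m : ℕ), ∀ v, t.realize v = ∑ i, (p i : ℝ) * v i + m := by
  classical
  induction t with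
  | var i => exact ⟨Pi.single i 1, 0, fun v => by simp [Pi.single_apply]⟩
  | func f ts ih =>
    cases f with
    | zero => exact ⟨0, 0, fun v => show (0 : ℝ) = _ by simp⟩
    | one => exact ⟨0, 1, fun v => show (1 : ℝ) = _ by simp⟩
    | add =>
      obtain ⟨p₀, m₀, h₀⟩ := ih 0
      obtain ⟨p₁, m₁, h₁⟩ := ih 1
      refine ⟨p₀ + p₁, m₀ + m₁, fun v => ?_⟩
      change (ts 0).realize v + (ts 1).realize v = _
      simp only [h₀, h₁, Pi.add_apply, Nat.cast_add, add_mul, Finset.sum_add_distrib]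
      ring

lemma exists_term_realize_eq_natAffine (p : β → ℕ) (m : ℕ) :
    ∃ t : ordAddLang.Term β, ∀ v, t.realize v = ∑ i, (p i : ℝ) * v i + m := by
  classical
  suffices ∀ s : Finset β, ∃ t : ordAddLang.Term β, ∀ v : β → ℝ,
      t.realize v = ∑ i ∈ s, (p i : ℝ) * v i + m from this Finset.univ
  intro s
  induction s using Finset.induction_on with
  | empty => exact ⟨nsmulRec m 1, by simp⟩
  | insert i s hi ih =>
    obtain ⟨t, ht⟩ := ih
    exact ⟨nsmulRec (p i) (Term.var i) + t, fun v => by simp [Finset.sum_insert hi, ht, add_assoc]⟩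

lemma exists_eval_eq_realize_sub (t₁ t₂ : ordAddLang.Term β) (s : Bool) :
    ∃ a : LinConstraint β, a.strict = s ∧ ∀ v, a.eval v = t₁.realize v - t₂.realize v := by
  obtain ⟨p₁, m₁, h₁⟩ := exists_natAffine_eq_realize t₁
  obtain ⟨p₂, m₂, h₂⟩ := exists_natAffine_eq_realize t₂
  refine ⟨⟨fun i => p₁ i - p₂ i, m₁ - m₂, s⟩, rfl, fun v => ?_⟩
  simp only [LinConstraint.eval, h₁, h₂, Int.cast_sub, Int.cast_natCast, sub_mul,
    Finset.sum_sub_distrib]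
  ring

lemma isRatSemilinear_setOf_realize_lt (t₁ t₂ : ordAddLang.Term β) :
    IsRatSemilinear {v | t₁.realize v < t₂.realize v} := by
  obtain ⟨a, hs, ha⟩ := exists_eval_eq_realize_sub t₁ t₂ true
  convert isRatSemilinear_setOf_holds a using 2 with v
  simp [Holds, hs, ha]

lemma isRatSemilinear_setOf_realize_eq (t₁ t₂ : ordAddLang.Term β) :
    IsRatSemilinear {v | t₁.realize v = t₂.realize v} := by
  obtain ⟨a, -, ha⟩ := exists_eval_eq_realize_sub t₁ t₂ false
  convert isRatSemilinear_setOf_eval_eq_zero a using 2 with v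
  simp [ha, sub_eq_zero]

end Terms

lemma isRatSemilinear_setOf_realize_boundedFormula {α : Type*} [Fintype α] {n : ℕ}
    (φ : ordAddLang.BoundedFormula α n) :
    IsRatSemilinear {v : α ⊕ Fin n → ℝ | φ.Realize (v ∘ Sum.inl) (v ∘ Sum.inr)} := by
  induction φ with
  | falsum => simpa [BoundedFormula.Realize] using isRatSemilinear_empty
  | equal t₁ t₂ => simpa [BoundedFormula.Realize] using isRatSemilinear_setOf_realize_eq t₁ t₂
  | rel R ts =>
    cases R
    simp only [BoundedFormula.Realize, Sum.elim_comp_inl_inr]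
    exact isRatSemilinear_setOf_realize_lt (ts 0) (ts 1)
  | imp φ ψ ihφ ihψ =>
    convert ihφ.compl.union ihψ using 1
    ext v
    simp [imp_iff_not_or]
  | @all n φ ih =>
    let ρ : α ⊕ Fin (n + 1) → Option (α ⊕ Fin n) :=
      Sum.elim (some ∘ Sum.inl) (Fin.lastCases none (some ∘ Sum.inr))
    convert (ih.compl.preimage_comp ρ).exists_elim'.compl using 1
    ext v
    simp only [BoundedFormula.realize_all, Set.mem_compl_iff, Set.mem_ofPred_eq,
      Set.mem_preimage, not_exists, not_not]
    refine forall_congr' fun t => Iff.of_eq ?_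
    congr 1
    ext j
    induction j using Fin.lastCases <;> simp [ρ]

theorem Set.Definable.isRatSemilinear {α : Type*} [Fintype α] {S : Set (α → ℝ)}
    (h : (∅ : Set ℝ).Definable ordAddLang S) : IsRatSemilinear S := by
  obtain ⟨φ, rfl⟩ := Set.empty_definable_iff.1 h
  convert (isRatSemilinear_setOf_realize_boundedFormula φ).preimage_comp
    (Sum.elim id finZeroElim) using 1
  ext v
  simp only [Set.mem_ofPred_eq, Set.mem_preimage, Formula.Realize]
  congr!

section Definability

variable {β : Type*}

lemma definable_setOf_realize_eq (t₁ t₂ : ordAddLang.Term β) :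
    (∅ : Set ℝ).Definable ordAddLang {v | t₁.realize v = t₂.realize v} :=
  Set.empty_definable_iff.2 ⟨t₁.equal t₂, by ext; simp⟩

lemma definable_setOf_realize_lt (t₁ t₂ : ordAddLang.Term β) :
    (∅ : Set ℝ).Definable ordAddLang {v | t₁.realize v < t₂.realize v} :=
  Set.empty_definable_iff.2
    ⟨Relations.formula₂ (L := ordAddLang) OrdAddRel.lt t₁ t₂, Set.ext fun v =>
      (Formula.realize_rel₂ (L := ordAddLang) (M := ℝ) (R := OrdAddRel.lt) (v := v)).symm⟩

variable [Fintype β]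

lemma definable_setOf_intAffine_eq_zero (z : β → ℤ) (m : ℤ) :
    (∅ : Set ℝ).Definable ordAddLang {v | ∑ i, (z i : ℝ) * v i + m = 0} := by
  obtain ⟨t₁, h₁⟩ := exists_term_realize_eq_natAffine (fun i => (z i).toNat) m.toNat
  obtain ⟨t₂, h₂⟩ := exists_term_realize_eq_natAffine (fun i => (-z i).toNat) (-m).toNat
  have hsplit (k : ℤ) : (k : ℝ) = k.toNat - (-k).toNat := by
    exact_mod_cast (Int.toNat_sub_toNat_neg k).symm
  convert definable_setOf_realize_eq t₁ t₂ using 1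
  ext v
  rw [Set.mem_ofPred_eq, Set.mem_ofPred_eq, h₁, h₂, ← sub_eq_zero]
  simp only [hsplit, sub_mul, Finset.sum_sub_distrib]
  constructor <;> intro h <;> linarith

lemma definable_setOf_ratAffine_eq_zero (c : β → ℚ) (b : ℚ) :
    (∅ : Set ℝ).Definable ordAddLang {v | ∑ i, (c i : ℝ) * v i + b = 0} := by
  obtain ⟨D, hD⟩ := IsLocalization.exist_integer_multiples_of_finite (nonZeroDivisors ℤ)
    (Option.elim' b c)
  choose z hz using hD
  have hz' (o : Option β) : (z o : ℝ) = (D : ℤ) * ((Option.elim' b c o : ℚ) : ℝ) := by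
    have := hz o
    rw [algebraMap_int_eq, eq_intCast, zsmul_eq_mul] at this
    exact_mod_cast congrArg (Rat.cast : ℚ → ℝ) this
  have hD0 : ((D : ℤ) : ℝ) ≠ 0 := by exact_mod_cast nonZeroDivisors.coe_ne_zero D
  convert definable_setOf_intAffine_eq_zero (z ∘ some) (z none) using 1
  ext v
  simp only [Set.mem_ofPred_eq, Function.comp_apply, hz', Option.elim'_none, Option.elim'_some,
    mul_assoc, ← Finset.mul_sum, ← mul_add, mul_eq_zero, hD0, false_or]

end Definability

lemma semilinear_affine {n : ℕ} (c : Fin n → ℚ) (b : ℚ) :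
    Semilinear (fun v : Fin n → ℝ => ∑ i, (c i : ℝ) * v i + b) := by
  unfold Semilinear
  convert definable_setOf_ratAffine_eq_zero (Fin.snoc c (-1)) b using 1
  ext v
  simp only [Set.mem_ofPred_eq, Fin.sum_univ_castSucc, Fin.snoc_castSucc, Fin.snoc_last]
  push_cast
  constructor <;> intro h <;> linarith

lemma semilinear_ifPos : Semilinear (n := 3) (fun v => if 0 < v 0 then v 1 else v 2) := by
  have hpos := definable_setOf_realize_lt (0 : ordAddLang.Term (Fin 4)) (Term.var 0)
  have heq (i : Fin 4) := definable_setOf_realize_eq (Term.var i) (Term.var 3)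
  unfold Semilinear
  convert (hpos.inter (heq 1)).union (hpos.compl.inter (heq 2)) using 1
  ext v
  by_cases h : 0 < v 0 <;> simp [h, Fin.last]

lemma Semilinear.comp {m n : ℕ} {g : (Fin m → ℝ) → ℝ} {f : Fin m → (Fin n → ℝ) → ℝ}
    (hg : Semilinear g) (hf : ∀ i, Semilinear (f i)) :
    Semilinear (fun v => g (fun i => f i v)) := by
  let σ : Fin (m + 1) → Fin (n + 1) ⊕ Fin m := Fin.lastCases (.inl (Fin.last n)) .inr
  let ρ (i : Fin m) : Fin (n + 1) → Fin (n + 1) ⊕ Fin m :=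
    Fin.lastCases (.inr i) (.inl ∘ Fin.castSucc)
  have hT := (Set.Definable.preimage_comp σ hg).inter
    (Set.definable_iInter_of_finite fun i => Set.Definable.preimage_comp (ρ i) (hf i))
  unfold Semilinear
  convert hT.exists_of_finite using 1
  ext v
  simp only [Set.mem_ofPred_eq, Set.preimage_ofPred_eq, Function.comp_apply, Set.mem_inter_iff,
    Set.mem_iInter, Fin.lastCases_castSucc, Fin.lastCases_last, Sum.elim_inl, Sum.elim_inr, σ, ρ]
  exact ⟨fun h => ⟨_, h, fun i => rfl⟩, fun ⟨u, hu, hfu⟩ => funext hfu ▸ hu⟩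

theorem SemilinGen.semilinear {n : ℕ} {f : (Fin n → ℝ) → ℝ} (h : SemilinGen f) :
    Semilinear f := by
  induction h with
  | affine c b => exact semilinear_affine c b
  | ifPos => exact semilinear_ifPos
  | comp _ _ hg hf => exact hg.comp hf

open Topology in
lemma exists_tight_of_isolated {α : Type*} [Fintype α] {B : List (LinConstraint (Option α))}
    {t : ℝ} {x : α → ℝ} (ht : Option.elim' t x ∈ basicSet B)
    (hiso : ∀ t', Option.elim' t' x ∈ basicSet B → t' = t) :
    ∃ a ∈ B, a.slope ≠ 0 ∧ a.eval (Option.elim' t x) = 0 := by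
  by_contra! hne
  have hev : ∀ᶠ t' in 𝓝 t, Option.elim' t' x ∈ basicSet B := by
    refine (Filter.eventually_all_finite B.finite_toSet).2 fun a ha => ?_
    by_cases h0 : a.slope = 0
    · exact .of_forall fun t' => (holds_elim'_of_slope_eq_zero h0 t' x).2
        ((holds_elim'_of_slope_eq_zero h0 t x).1 (ht a ha))
    · have hcont : Continuous fun t' => a.eval (Option.elim' t' x) := by
        simp only [eval_elim']
        fun_prop
      filter_upwards [hcont.continuousAt.eventually_lt continuousAt_const
        ((ht a ha).lt_of_ne (hne a ha h0))] with t' ht' using LtOrLe.of_lt ht'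
  obtain ⟨t', ht', hne'⟩ := ((hev.filter_mono nhdsWithin_le_nhds).and
    (self_mem_nhdsWithin (s := {t}ᶜ))).exists
  exact hne' (hiso t' ht')

lemma semilinGen_zero {n : ℕ} : SemilinGen (n := n) fun _ => 0 := by
  simpa using SemilinGen.affine (n := n) 0 0

lemma semilinGen_eval {n : ℕ} (a : LinConstraint (Fin n)) : SemilinGen fun v => a.eval v := by
  simpa [LinConstraint.eval] using SemilinGen.affine (fun i => (a.coeff i : ℚ)) a.const

lemma semilinGen_root {n : ℕ} (a : LinConstraint (Option (Fin n))) : SemilinGen a.root := by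
  convert SemilinGen.affine (fun i => -(a.coeff (some i) : ℚ) / a.slope) (-a.const / a.slope)
    using 1
  funext x
  simp only [root, tail, eval, Function.comp_apply, Rat.cast_div, Rat.cast_neg, Rat.cast_intCast,
    div_mul_eq_mul_div, neg_mul, Finset.sum_neg_distrib, ← Finset.sum_div]
  ring

namespace SemilinGen

variable {n : ℕ}

lemma ite {c g h : (Fin n → ℝ) → ℝ} (hc : SemilinGen c) (hg : SemilinGen g)
    (hh : SemilinGen h) : SemilinGen fun v => if 0 < c v then g v else h v := by
  have := SemilinGen.comp SemilinGen.ifPos (f := ![c, g, h]) fun i => by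
    fin_cases i <;> assumption
  simpa using this

open Classical in
lemma ite_holds (a : LinConstraint (Fin n)) {g h : (Fin n → ℝ) → ℝ} (hg : SemilinGen g)
    (hh : SemilinGen h) : SemilinGen fun v => if a.Holds v then g v else h v := by
  cases hs : a.strict
  · convert (semilinGen_eval a).ite hh hg using 1
    funext v
    by_cases h0 : 0 < a.eval v <;> simp [Holds, hs, h0]
  · convert (semilinGen_eval a.neg).ite hg hh using 1
    funext v
    simp [Holds, hs, eval_neg]

open Classical in
lemma ite_mem_basicSet (B : List (LinConstraint (Fin n))) {g h : (Fin n → ℝ) → ℝ}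
    (hg : SemilinGen g) (hh : SemilinGen h) :
    SemilinGen fun v => if v ∈ basicSet B then g v else h v := by
  induction B generalizing g with
  | nil => simpa [basicSet] using hg
  | cons a B ih =>
    convert ite_holds a (ih hg) hh using 1
    funext v
    by_cases ha : a.Holds v <;> by_cases hB : v ∈ basicSet B <;> simp [mem_basicSet_cons, ha, hB]

open Classical in
lemma ite_mem {C : Set (Fin n → ℝ)} (hC : IsRatSemilinear C) {g h : (Fin n → ℝ) → ℝ}
    (hg : SemilinGen g) (hh : SemilinGen h) :
    SemilinGen fun v => if v ∈ C then g v else h v := by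
  obtain ⟨L, rfl⟩ := hC
  induction L generalizing h with
  | nil => simpa using hh
  | cons B L ih =>
    convert ite_mem_basicSet B hg (ih hh) using 1
    funext v
    by_cases hB : v ∈ basicSet B <;> simp [hB]

lemma of_pieces {ι : Type*} {f : (Fin n → ℝ) → ℝ} (A : List ι) (g : ι → (Fin n → ℝ) → ℝ)
    (C : ι → Set (Fin n → ℝ)) (hg : ∀ i ∈ A, SemilinGen (g i))
    (hC : ∀ i ∈ A, IsRatSemilinear (C i)) (hf : ∀ i ∈ A, ∀ x ∈ C i, f x = g i x)
    (hcover : ∀ x, ∃ i ∈ A, x ∈ C i) : SemilinGen f := by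
  classical
  suffices ∃ h, SemilinGen h ∧ ∀ x, (∃ i ∈ A, x ∈ C i) → h x = f x by
    obtain ⟨h, hh, hhf⟩ := this
    exact funext (fun x => hhf x (hcover x)) ▸ hh
  clear hcover
  induction A with
  | nil => exact ⟨_, semilinGen_zero, by simp⟩
  | cons i A ih =>
    obtain ⟨h, hh, hhf⟩ := ih (fun j hj => hg j (.tail _ hj)) (fun j hj => hC j (.tail _ hj))
      (fun j hj => hf j (.tail _ hj))
    refine ⟨fun x => if x ∈ C i then g i x else h x,
      ite_mem (hC i (.head _)) (hg i (.head _)) hh, fun x hx => ?_⟩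
    by_cases hxi : x ∈ C i
    · simp [hxi, hf i (.head _) x hxi]
    · simp only [hxi, if_false]
      exact hhf x (by simpa [hxi] using hx)

end SemilinGen

theorem semilinGen_of_isRatSemilinear_graph {n : ℕ} {f : (Fin n → ℝ) → ℝ}
    (hG : IsRatSemilinear {u : Option (Fin n) → ℝ | f (fun i => u (some i)) = u none}) :
    SemilinGen f := by
  set G := {u : Option (Fin n) → ℝ | f (fun i => u (some i)) = u none}
  have mem_G (t : ℝ) (x : Fin n → ℝ) : Option.elim' t x ∈ G ↔ f x = t := Iff.rfl
  obtain ⟨L, hL⟩ := id hG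
  refine SemilinGen.of_pieces (L.flatten.filter (·.slope ≠ 0)) root
    (fun a => {x | a.eval (Option.elim' (f x) x) = 0}) (fun a _ => semilinGen_root a)
    (fun a _ => ?_) (fun a ha x hx => ?_) (fun x => ?_)
  · convert (hG.inter (isRatSemilinear_setOf_eval_eq_zero a)).exists_elim' using 1
    ext x
    refine ⟨fun hx => ⟨f x, rfl, hx⟩, ?_⟩
    rintro ⟨t, ht, hx⟩
    obtain rfl := (mem_G t x).1 ht
    exact hx
  · have h0 : a.slope ≠ 0 := by simpa using (List.mem_filter.1 ha).2
    rw [Set.mem_ofPred_eq, eval_elim'_eq_slope_mul h0] at hx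
    simpa [h0, sub_eq_zero] using hx
  · have hx : Option.elim' (f x) x ∈ G := (mem_G (f x) x).2 rfl
    rw [hL] at hx
    obtain ⟨B, hB, hxB⟩ := hx
    obtain ⟨a, haB, ha0, hax⟩ := exists_tight_of_isolated hxB fun t' ht' =>
      ((mem_G t' x).1 (hL ▸ ⟨B, hB, ht'⟩)).symm
    exact ⟨a, List.mem_filter.2 ⟨List.mem_flatten.2 ⟨B, hB, haB⟩, by simpa using ha0⟩, hax⟩

/-- The semilinear functions `ℝⁿ → ℝ` are exactly the members of the smallest
composition-closed class generated by rational affine functions and `ifPos`. -/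
theorem semilinear_iff_generated {n : ℕ} (f : (Fin n → ℝ) → ℝ) :
    Semilinear f ↔ SemilinGen f := by
  refine ⟨fun h => semilinGen_of_isRatSemilinear_graph ?_, SemilinGen.semilinear⟩
  convert (Set.Definable.isRatSemilinear h).preimage_comp (Fin.lastCases none some) using 1
  ext u
  simp
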